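/- Suppose μ > 0 and λ ≥ 0. For every n×n complex matrix M, ‖M‖_F² ≤ (nλ + 2μ)·Re⟨C⁻¹M, M⟩_F. (This is the coercivity of C⁻¹ underlying the paper's norm equivalence between ‖·‖_F and ‖·‖_{C⁻¹}; for λ = 0 the constant reduces to the paper's constant 2μ.) -/

import Mathlib

open Matrix BigOperators

/-- The inverse Hooke tensor `C⁻¹ M = (1/(2μ)) M − (λ/(2μ(nλ+2μ))) tr(M) I`. -/
noncomputable def hookeCinv (n : ℕ) (μ lam : ℝ) (M : Matrix (Fin n) (Fin n) ℂ) :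
    Matrix (Fin n) (Fin n) ℂ :=
  ((1 / (2 * μ) : ℝ) : ℂ) • M -
    (((lam / (2 * μ * ((n : ℝ) * lam + 2 * μ)) : ℝ) : ℂ) * Matrix.trace M) •
      (1 : Matrix (Fin n) (Fin n) ℂ)

/-- The Frobenius inner product `⟨A,B⟩_F = ∑_{i,j} A_{ij} conj(B_{ij})`. -/
noncomputable def frob (n : ℕ) (A B : Matrix (Fin n) (Fin n) ℂ) : ℂ :=
  ∑ i, ∑ j, A i j * (starRingEnd ℂ) (B i j)

/-- The squared Frobenius norm `‖A‖_F² = ∑_{i,j} |A_{ij}|²`. -/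
noncomputable def frobNormSq (n : ℕ) (A : Matrix (Fin n) (Fin n) ℂ) : ℝ :=
  ∑ i, ∑ j, ‖A i j‖ ^ 2

/-! Since `tr M = ⟨M, I⟩_F`, Cauchy–Schwarz gives `|tr M|² ≤ n ‖M‖_F²`, so
`⟨C⁻¹M, M⟩_F = ‖M‖_F² / (2μ) − λ |tr M|² / (2μ(nλ+2μ))` is at least
`‖M‖_F² / (2μ) − nλ ‖M‖_F² / (2μ(nλ+2μ)) = ‖M‖_F² / (nλ+2μ)`. -/

section Frobenius

variable {n : ℕ}

lemma frob_smul_sub_smul (c d : ℂ) (A B C : Matrix (Fin n) (Fin n) ℂ) :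
    frob n (c • A - d • B) C = c * frob n A C - d * frob n B C := by
  simp only [frob, Matrix.sub_apply, Matrix.smul_apply, smul_eq_mul, sub_mul,
    Finset.sum_sub_distrib, Finset.mul_sum, mul_assoc]

lemma frob_self (M : Matrix (Fin n) (Fin n) ℂ) : frob n M M = frobNormSq n M := by
  simp only [frob, frobNormSq, Complex.mul_conj', Complex.ofReal_sum, Complex.ofReal_pow]

lemma frob_one_left (M : Matrix (Fin n) (Fin n) ℂ) :
    frob n 1 M = starRingEnd ℂ (trace M) := by
  simp [frob, trace, one_apply]

lemma sum_norm_diag_sq_le_frobNormSq (M : Matrix (Fin n) (Fin n) ℂ) :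
    ∑ i, ‖M i i‖ ^ 2 ≤ frobNormSq n M :=
  Finset.sum_le_sum fun i _ =>
    Finset.single_le_sum (fun j _ => sq_nonneg ‖M i j‖) (Finset.mem_univ i)

lemma norm_trace_sq_le (M : Matrix (Fin n) (Fin n) ℂ) :
    ‖trace M‖ ^ 2 ≤ n * frobNormSq n M :=
  calc ‖trace M‖ ^ 2 ≤ (∑ i, ‖M i i‖) ^ 2 := by
        gcongr
        exact norm_sum_le _ _
    _ ≤ n * ∑ i, ‖M i i‖ ^ 2 := by
        simpa using sq_sum_le_card_mul_sum_sq (s := Finset.univ) (f := fun i => ‖M i i‖)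
    _ ≤ n * frobNormSq n M := by
        gcongr
        exact sum_norm_diag_sq_le_frobNormSq M

end Frobenius

lemma re_frob_hookeCinv_self (n : ℕ) (μ lam : ℝ) (M : Matrix (Fin n) (Fin n) ℂ) :
    (frob n (hookeCinv n μ lam M) M).re =
      1 / (2 * μ) * frobNormSq n M -
        lam / (2 * μ * (n * lam + 2 * μ)) * ‖trace M‖ ^ 2 := by
  rw [hookeCinv, frob_smul_sub_smul, frob_self, frob_one_left, mul_assoc, Complex.mul_conj']
  norm_cast

theorem frob_hookeCinv_coercive_general (n : ℕ) (μ lam : ℝ) (hμ : 0 < μ)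
    (hlam : 0 ≤ lam) (M : Matrix (Fin n) (Fin n) ℂ) :
    frobNormSq n M ≤
      ((n : ℝ) * lam + 2 * μ) * (frob n (hookeCinv n μ lam M) M).re := by
  have hstiff : (n : ℝ) * lam + 2 * μ ≠ 0 := by positivity
  have hsplit : ((n : ℝ) * lam + 2 * μ) * (1 / (2 * μ) * frobNormSq n M -
        lam / (2 * μ * (n * lam + 2 * μ)) * ‖trace M‖ ^ 2) =
      frobNormSq n M + lam * (n * frobNormSq n M - ‖trace M‖ ^ 2) / (2 * μ) := by
    field_simp
    ring
  have hslack : 0 ≤ lam * (n * frobNormSq n M - ‖trace M‖ ^ 2) / (2 * μ) :=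
    div_nonneg (mul_nonneg hlam (sub_nonneg.2 (norm_trace_sq_le M))) (by positivity)
  rw [re_frob_hookeCinv_self, hsplit]
  linarith

/-- Coercivity of `C⁻¹`: for `μ > 0` and `λ ≥ 0`,
`‖M‖_F² ≤ (nλ + 2μ) Re⟨C⁻¹M, M⟩_F`. -/
theorem frob_hookeCinv_coercive (n : ℕ) (hn : 1 ≤ n) (μ lam : ℝ) (hμ : 0 < μ)
    (hlam : 0 ≤ lam) (M : Matrix (Fin n) (Fin n) ℂ) :
    frobNormSq n M ≤
      ((n : ℝ) * lam + 2 * μ) * (frob n (hookeCinv n μ lam M) M).re :=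
  frob_hookeCinv_coercive_general n μ lam hμ hlam M
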